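/- The set m₂ := {(a, b, c) ∈ W : a is even} is an ideal of W; it is a maximal ideal, the quotient ring W/m₂ has exactly two elements (so W/m₂ ≅ 𝔽₂), and m₂ is the unique maximal ideal of W containing the element 2 = (2, 2, 2); consequently m₂ is the unique maximal ideal of W of residue characteristic 2. -/

import Mathlib

/-!
For `x = (a, b, c) ∈ m₂` the square `x²` lies in `2R`: `a` and `b.re` are even, and `c` is a
multiple of `1 + √3`, whose square is `2 (2 + √3)`. Since `2R ⊆ W`, this puts `x⁴` in `2W`, so
`m₂` lies in the radical of `2W` and every prime of `W` containing `2` contains `m₂`. Finally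
`m₂` is the kernel of the surjection `W → 𝔽₂`, `(a, b, c) ↦ a mod 2`.
-/

abbrev Rng : Type := ℤ × Zsqrtd 2 × Zsqrtd 3

def Wset : Set Rng :=
  {p | p.1 ≡ p.2.1.re [ZMOD 2] ∧ p.1 ≡ p.2.2.re + p.2.2.im [ZMOD 2] ∧
       p.2.1.im ≡ p.2.2.im [ZMOD 2]}

private lemma modeq_iff (a b : ℤ) : a ≡ b [ZMOD 2] ↔ ((a : ZMod 2) = b) :=
  (ZMod.intCast_eq_intCast_iff a b 2).symm

def W : Subring Rng where
  carrier := Wset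
  zero_mem' := by refine ⟨?_, ?_, ?_⟩ <;> decide
  one_mem' := by refine ⟨?_, ?_, ?_⟩ <;> decide
  add_mem' := by
    rintro a b ⟨h1, h2, h3⟩ ⟨g1, g2, g3⟩
    refine ⟨h1.add g1, ?_, h3.add g3⟩
    simpa [add_add_add_comm] using h2.add g2
  neg_mem' := by
    rintro a ⟨h1, h2, h3⟩
    refine ⟨h1.neg, ?_, h3.neg⟩
    have := h2.neg
    simp only [Wset, Set.mem_setOf_eq, Prod.fst_neg, Prod.snd_neg, Zsqrtd.re_neg,
      Zsqrtd.im_neg, Int.modEq_iff_dvd] at this ⊢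
    omega
  mul_mem' := by
    rintro a b ⟨h1, h2, h3⟩ ⟨g1, g2, g3⟩
    simp only [Wset, Set.mem_setOf_eq, Prod.fst_mul, Prod.snd_mul, Zsqrtd.re_mul,
      Zsqrtd.im_mul, modeq_iff] at h1 h2 h3 g1 g2 g3 ⊢
    push_cast at h1 h2 h3 g1 g2 g3 ⊢
    have h0 : (2 : ZMod 2) = 0 := rfl
    refine ⟨?_, ?_, ?_⟩
    · rw [← h1, ← g1, h0]; ring
    · linear_combination (b.1 : ZMod 2) * h2 + ((a.2.2.re : ZMod 2) + a.2.2.im) * g2 -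
        ((a.2.2.im : ZMod 2) * b.2.2.im) * h0
    · linear_combination (b.2.1.im : ZMod 2) * h2 - (b.2.1.im : ZMod 2) * h1
        + (b.2.1.re : ZMod 2) * h3 + ((a.2.2.re : ZMod 2) + a.2.2.im) * g3
        + (a.2.2.im : ZMod 2) * g2 - (a.2.2.im : ZMod 2) * g1
        + ((a.2.2.im : ZMod 2) * b.2.2.im) * h0

lemma mem_W_iff (x : Rng) : x ∈ W ↔ x ∈ Wset := Iff.rfl

/-- The ideal `m₂ = {(a, b, c) ∈ W : a is even}` of `W`. -/
def m2 : Ideal W where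
  carrier := {x | Even ((x : Rng).1)}
  zero_mem' := Even.zero
  add_mem' := fun hx hy => hx.add hy
  smul_mem' := fun c x hx => hx.mul_left ((c : Rng).1)

namespace Zsqrtd

variable {d : ℤ}

theorem two_dvd_sq_of_even_re (hd : Even d) {z : Zsqrtd d} (hz : Even z.re) : 2 ∣ z ^ 2 := by
  rw [← Int.cast_two, intCast_dvd, sq, re_mul, im_mul, ← even_iff_two_dvd, ← even_iff_two_dvd]
  simp [Int.even_add, parity_simps, hd, hz]

theorem two_dvd_sq_of_odd_of_even_re_add_im (hd : Odd d) {z : Zsqrtd d}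
    (hz : Even (z.re + z.im)) : 2 ∣ z ^ 2 := by
  rw [← Int.cast_two, intCast_dvd, sq, re_mul, im_mul, ← even_iff_two_dvd, ← even_iff_two_dvd]
  rw [Int.even_add] at hz
  simp [Int.even_add, parity_simps, hd, hz]

end Zsqrtd

theorem Ideal.natCast_mem_of_ringChar_quotient_eq {R : Type*} [CommRing R] {I : Ideal R} {n : ℕ}
    (h : ringChar (R ⧸ I) = n) : (n : R) ∈ I := by
  rw [← Ideal.Quotient.eq_zero_iff_mem, map_natCast, ← h]
  exact ringChar.Nat.cast_ringChar

theorem Ideal.IsMaximal.eq_of_le_radical_of_le {R : Type*} [CommRing R] {M I P : Ideal R}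
    (hM : M.IsMaximal) (hMI : M ≤ I.radical) (hP : P.IsPrime) (hIP : I ≤ P) : P = M :=
  (hM.eq_of_le hP.ne_top (hMI.trans (hP.radical_le_iff.2 hIP))).symm

theorem two_mul_mem_W (r : Rng) : 2 * r ∈ W := by
  refine ⟨?_, ?_, ?_⟩ <;> simp [Int.ModEq]

theorem two_dvd_sq_of_mem_m2 {x : W} (hx : x ∈ m2) : (2 : Rng) ∣ (x : Rng) ^ 2 := by
  obtain ⟨⟨a, b, c⟩, hab, hac, _⟩ := x
  have ha : a % 2 = 0 := Int.even_iff.1 hx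
  refine prod_dvd_iff.2 ⟨even_iff_two_dvd.1 ((Int.even_pow' two_ne_zero).2 hx), prod_dvd_iff.2
    ⟨Zsqrtd.two_dvd_sq_of_even_re even_two (Int.even_iff.2 ?_),
      Zsqrtd.two_dvd_sq_of_odd_of_even_re_add_im (by decide) (Int.even_iff.2 ?_)⟩⟩
  · rw [← hab.eq, ha]
  · rw [← hac.eq, ha]

theorem m2_le_radical_span_two : m2 ≤ (Ideal.span {(2 : W)}).radical := by
  intro x hx
  obtain ⟨r, hr⟩ := two_dvd_sq_of_mem_m2 hx
  refine ⟨4, Ideal.mem_span_singleton.2 ⟨⟨2 * r ^ 2, two_mul_mem_W _⟩, Subtype.ext ?_⟩⟩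
  calc (x : Rng) ^ 4 = ((x : Rng) ^ 2) ^ 2 := by ring
    _ = 2 * (2 * r ^ 2) := by rw [hr]; ring

def toZModTwo : W →+* ZMod 2 :=
  (Int.castRingHom (ZMod 2)).comp ((RingHom.fst ℤ _).comp W.subtype)

theorem ker_toZModTwo : RingHom.ker toZModTwo = m2 := by
  ext x
  exact ZMod.intCast_eq_zero_iff_even

theorem m2_isMaximal : m2.IsMaximal :=
  ker_toZModTwo ▸ RingHom.ker_isMaximal_of_surjective _ (ZMod.ringHom_surjective _)

theorem card_quotient_m2 : Nat.card (W ⧸ m2) = 2 := by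
  rw [← ker_toZModTwo,
    Nat.card_congr (RingHom.quotientKerEquivOfSurjective (ZMod.ringHom_surjective toZModTwo)).toEquiv,
    Nat.card_zmod]

/-- `m₂ = {(a,b,c) ∈ W : a even}` is an ideal of `W` (witnessed by the definition `m2`
above); it is maximal, the quotient `W/m₂` has exactly two elements, and `m₂` is the
unique maximal ideal of `W` containing `2 = (2,2,2)`; consequently it is the unique
maximal ideal of `W` of residue characteristic `2`. -/
theorem stmt6 :
    m2.IsMaximal ∧ Nat.card (W ⧸ m2) = 2 ∧
    (∀ m : Ideal W, m.IsMaximal → (2 : W) ∈ m → m = m2) ∧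
    (∀ m : Ideal W, m.IsMaximal → ringChar (W ⧸ m) = 2 → m = m2) := by
  have huniq : ∀ m : Ideal W, m.IsMaximal → (2 : W) ∈ m → m = m2 := fun m hm h2 =>
    m2_isMaximal.eq_of_le_radical_of_le m2_le_radical_span_two hm.isPrime
      ((Ideal.span_singleton_le_iff_mem m).2 h2)
  refine ⟨m2_isMaximal, card_quotient_m2, huniq, fun m hm hchar => huniq m hm ?_⟩
  simpa using Ideal.natCast_mem_of_ringChar_quotient_eq hchar
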